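/- arXiv:2107.04693 — 2 statements merged into one kernel-verified Lean document; each statement's English description precedes it below -/
import Mathlib

section
/- With the notation of Guignard's lemma (g : ℝⁿ → E differentiable, K closed convex cone, g(x̄) ∈ K), the linearized cone L = {d : Dg(x̄)d ∈ T_K(g(x̄))} equals the polar of H = Dg(x̄)ᵀ[N_K(g(x̄))]; i.e., L = H°. -/
/-!
By the adjoint identity `⟪Dgᵀ v, d⟫ = ⟪v, Dg d⟫`, a direction `d` lies in `H°` exactly when
`Dg d ∈ T°°`, where `T = T_K(g x̄)`. For convex `K`, `T` is the closure of the cone generated by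
`K - g x̄`, a closed convex cone, so `T°° = T` by the bipolar theorem (Farkas' lemma).
-/

open scoped RealInnerProductSpace

/-- Polar of a set in a real inner product space. -/
def polarSet {E : Type*} [NormedAddCommGroup E] [InnerProductSpace ℝ E] (S : Set E) : Set E :=
  {z | ∀ y ∈ S, ⟪z, y⟫ ≤ 0}

/-- Tangent cone to a convex set `K` at `y`: the closure of the cone of feasible directions. -/
def tangentConeCvx {E : Type*} [NormedAddCommGroup E] [InnerProductSpace ℝ E]
    (K : Set E) (y : E) : Set E :=
  closure {w | ∃ c : ℝ, 0 ≤ c ∧ ∃ k ∈ K, w = c • (k - y)}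

section Polar

variable {E F : Type*} [NormedAddCommGroup E] [InnerProductSpace ℝ E]
  [NormedAddCommGroup F] [InnerProductSpace ℝ F]

lemma polarSet_polarSet [CompleteSpace E] (S : Set E) :
    polarSet (polarSet S) = ProperCone.innerDual (ProperCone.innerDual S : Set E) := by
  ext z
  simp only [polarSet, Set.mem_ofPred_eq, SetLike.mem_coe, ProperCone.mem_innerDual]
  refine (Equiv.neg E).forall_congr fun {w} => ?_
  simp [real_inner_comm w]

lemma ProperCone.polarSet_polarSet [CompleteSpace E] (C : ProperCone ℝ E) :
    polarSet (polarSet (C : Set E)) = C := by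
  rw [_root_.polarSet_polarSet, innerDual_innerDual]

lemma polarSet_image_adjoint [CompleteSpace E] [CompleteSpace F] (A : F →L[ℝ] E) (S : Set E) :
    polarSet (ContinuousLinearMap.adjoint A '' S) = A ⁻¹' polarSet S := by
  ext d
  simp [polarSet, ContinuousLinearMap.adjoint_inner_right]

end Polar

section TangentCone

variable {E : Type*} [NormedAddCommGroup E] [InnerProductSpace ℝ E] {K : Set E} {y : E}

lemma setOf_smul_sub_eq_hull (hK : Convex ℝ K) (hy : y ∈ K) :
    {w | ∃ c : ℝ, 0 ≤ c ∧ ∃ k ∈ K, w = c • (k - y)} =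
      ConvexCone.hull ℝ ((fun x => -y + x) '' K) := by
  rw [ConvexCone.coe_hull_of_convex (hK.translate _)]
  ext w
  simp only [Set.mem_ofPred_eq, Set.mem_smul_set, Set.mem_image]
  constructor
  · rintro ⟨c, hc, k, hk, rfl⟩
    rcases hc.eq_or_lt with rfl | hc
    · exact ⟨1, one_pos, 0, ⟨y, hy, neg_add_cancel y⟩, by simp⟩
    · exact ⟨c, hc, k - y, ⟨k, hk, neg_add_eq_sub y k⟩, rfl⟩
  · rintro ⟨c, hc, _, ⟨k, hk, rfl⟩, rfl⟩
    exact ⟨c, hc.le, k, hk, by rw [neg_add_eq_sub]⟩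

variable (K) in
def tangentProperCone (hy : y ∈ K) : ProperCone ℝ E :=
  Submodule.closure <| (ConvexCone.hull ℝ ((fun x => -y + x) '' K)).toPointedCone <|
    ConvexCone.subset_hull ⟨y, hy, neg_add_cancel y⟩

lemma coe_tangentProperCone (hK : Convex ℝ K) (hy : y ∈ K) :
    (tangentProperCone K hy : Set E) = tangentConeCvx K y := by
  rw [tangentConeCvx, setOf_smul_sub_eq_hull hK hy]
  rfl

end TangentCone

theorem stmt2_general {n : ℕ} {E : Type*} [NormedAddCommGroup E] [InnerProductSpace ℝ E]
    [FiniteDimensional ℝ E] (K : Set E) (hconv : Convex ℝ K)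
    (g : EuclideanSpace ℝ (Fin n) → E) (x0 : EuclideanSpace ℝ (Fin n))
    (Dg : EuclideanSpace ℝ (Fin n) →L[ℝ] E)
    (hfeas : g x0 ∈ K) :
    {d | Dg d ∈ tangentConeCvx K (g x0)} =
      polarSet (⇑(ContinuousLinearMap.adjoint Dg) ''
        polarSet (tangentConeCvx K (g x0))) := by
  rw [polarSet_image_adjoint, ← coe_tangentProperCone hconv hfeas,
    ProperCone.polarSet_polarSet]
  rfl

/-- The linearized cone `L = {d : Dg(x̄)d ∈ T_K(g(x̄))}` equals the polar of
`H = Dg(x̄)ᵀ[N_K(g(x̄))]`, i.e. `L = H°`. -/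
theorem stmt2 {n : ℕ} {E : Type*} [NormedAddCommGroup E] [InnerProductSpace ℝ E]
    [FiniteDimensional ℝ E] (K : Set E) (hclosed : IsClosed K) (hconv : Convex ℝ K)
    (hcone : ∀ x ∈ K, ∀ c : ℝ, 0 ≤ c → c • x ∈ K)
    (g : EuclideanSpace ℝ (Fin n) → E) (x0 : EuclideanSpace ℝ (Fin n))
    (Dg : EuclideanSpace ℝ (Fin n) →L[ℝ] E) (hg : HasFDerivAt g Dg x0)
    (hfeas : g x0 ∈ K) :
    {d | Dg d ∈ tangentConeCvx K (g x0)} =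
      polarSet (⇑(ContinuousLinearMap.adjoint Dg) ''
        polarSet (tangentConeCvx K (g x0))) :=
  stmt2_general K hconv g x0 Dg hfeas
end

section
/- F is a face of the positive semidefinite cone S^k₊ if and only if there exist an orthogonal matrix U ∈ ℝ^{k×k} and an integer s with 0 ≤ s ≤ k such that F = {U·[[A,0],[0,0]]·Uᵀ : A ∈ Sˢ₊}, where [[A,0],[0,0]] denotes the k×k block matrix with upper-left s×s block A and zeros elsewhere. -/
open scoped Matrix
/-- `F` is a face of the convex cone `C`. -/
def IsFace {E : Type*} [AddCommGroup E] [Module ℝ E] (C F : Set E) : Prop :=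
  F.Nonempty ∧ F ⊆ C ∧ Convex ℝ F ∧
    ∀ y ∈ F, ∀ z ∈ C, ∀ w ∈ C, ∀ α : ℝ, 0 < α → α < 1 →
      y = α • z + (1 - α) • w → z ∈ F ∧ w ∈ F

/-- The `k×k` matrix `[[A, 0], [0, 0]]` with upper-left `s×s` block `A`. -/
def embedBlock (k s : ℕ) (A : Matrix (Fin s) (Fin s) ℝ) : Matrix (Fin k) (Fin k) ℝ :=
  Matrix.of fun i j =>
    if hi : (i : ℕ) < s then if hj : (j : ℕ) < s then A ⟨i, hi⟩ ⟨j, hj⟩ else 0 else 0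

/-!
A face `F` of `Sᵏ₊` is determined by an element `Y` of maximal rank. The midpoint of `Y` and any
`Z ∈ F` lies in `F` and has kernel `ker Y ∩ ker Z`, so maximality forces `ker Y ⊆ ker Z`.
Conversely, if `Z ⪰ 0` and `ker Y ⊆ ker Z`, then `Y - εZ ⪰ 0` for small `ε > 0`, and
`Y = ½ (2εZ) + ½ (2(Y - εZ))` puts `Z` in `F`. Hence `F = {Z ⪰ 0 : ker Y ⊆ ker Z}`, which in an
eigenbasis of `Y` is the set of blocks `[[A, 0], [0, 0]]`. Conversely, every set
`{Z ⪰ 0 : V ⊆ ker Z}` is a face: if `y v = 0` and `y = αz + (1-α)w`, then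
`vᵀzv = vᵀwv = 0`, hence `z v = w v = 0`.
-/

open Matrix

section Faces

variable {E : Type*} [AddCommGroup E] [Module ℝ E] {C F : Set E}

theorem IsFace.smul_mem (hC : ∀ c : ℝ, 0 < c → ∀ x ∈ C, c • x ∈ C) (hF : IsFace C F)
    {y : E} (hy : y ∈ F) {c : ℝ} (hc : 0 < c) : c • y ∈ F := by
  obtain ⟨-, hFC, -, hface⟩ := hF
  have hα1 : (c + 1)⁻¹ < 1 := inv_lt_one_of_one_lt₀ (by linarith)
  have hsplit : y = (c + 1)⁻¹ • (c • y) + (1 - (c + 1)⁻¹) • (c⁻¹ • y) := by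
    rw [smul_smul, smul_smul, ← add_smul]
    convert (one_smul ℝ y).symm using 2
    field_simp
    ring
  exact (hface y hy _ (hC c hc y (hFC hy)) _ (hC _ (inv_pos.2 hc) y (hFC hy)) _
    (by positivity) hα1 hsplit).1

theorem IsFace.mem_of_sub_smul_mem (hC : ∀ c : ℝ, 0 < c → ∀ x ∈ C, c • x ∈ C)
    (hF : IsFace C F) {y z : E} (hy : y ∈ F) (hz : z ∈ C) {ε : ℝ} (hε : 0 < ε)
    (hyz : y - ε • z ∈ C) : z ∈ F := by
  have hsplit : y = (1 / 2 : ℝ) • ((2 * ε) • z) + (1 - 1 / 2 : ℝ) • ((2 : ℝ) • (y - ε • z)) := by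
    module
  have h2εz : (2 * ε) • z ∈ F :=
    (hF.2.2.2 y hy _ (hC _ (by positivity) z hz) _ (hC 2 two_pos _ hyz) _ one_half_pos
      one_half_lt_one hsplit).1
  have h2ε : 0 < 2 * ε := by positivity
  simpa only [smul_smul, inv_mul_cancel₀ h2ε.ne', one_smul] using
    hF.smul_mem hC h2εz (inv_pos.2 h2ε)

end Faces

section PosSemidef

variable {n : Type*} [Fintype n]

theorem Matrix.PosSemidef.mulVec_eq_zero_of_smul_add_smul {Z W : Matrix n n ℝ}
    (hZ : Z.PosSemidef) (hW : W.PosSemidef) {a b : ℝ} (ha : 0 < a) (hb : 0 ≤ b) {v : n → ℝ}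
    (h : (a • Z + b • W) *ᵥ v = 0) : Z *ᵥ v = 0 := by
  have hsum : a * (v ⬝ᵥ Z *ᵥ v) + b * (v ⬝ᵥ W *ᵥ v) = 0 := by
    simpa [add_mulVec, smul_mulVec, dotProduct_add, dotProduct_smul] using
      congrArg (v ⬝ᵥ ·) h
  have hZv : 0 ≤ v ⬝ᵥ Z *ᵥ v := by simpa using hZ.dotProduct_mulVec_nonneg v
  have hWv : 0 ≤ v ⬝ᵥ W *ᵥ v := by simpa using hW.dotProduct_mulVec_nonneg v
  have hZv0 : v ⬝ᵥ Z *ᵥ v = 0 := by nlinarith [mul_nonneg hb hWv]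
  exact (hZ.dotProduct_mulVec_zero_iff v).1 (by simpa using hZv0)

theorem isFace_setOf_posSemidef_mulVec_eq_zero (S : Set (n → ℝ)) :
    IsFace {A : Matrix n n ℝ | A.PosSemidef} {Z | Z.PosSemidef ∧ ∀ v ∈ S, Z *ᵥ v = 0} := by
  refine ⟨⟨0, PosSemidef.zero, fun v _ => zero_mulVec v⟩, fun Z hZ => hZ.1, ?_, ?_⟩
  · rintro Z ⟨hZ, hZS⟩ W ⟨hW, hWS⟩ a b ha hb -
    refine ⟨(hZ.smul ha).add (hW.smul hb), fun v hv => ?_⟩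
    simp [add_mulVec, smul_mulVec, hZS v hv, hWS v hv]
  · rintro Y ⟨-, hYS⟩ Z hZ W hW α hα hα1 rfl
    have hα1' : 0 < 1 - α := sub_pos.2 hα1
    refine ⟨⟨hZ, fun v hv => ?_⟩, ⟨hW, fun v hv => ?_⟩⟩
    · exact hZ.mulVec_eq_zero_of_smul_add_smul hW hα hα1'.le (hYS v hv)
    · exact hW.mulVec_eq_zero_of_smul_add_smul hZ hα1' hα.le (by rw [add_comm]; exact hYS v hv)

theorem IsFace.exists_forall_mulVec_eq_zero_imp {F : Set (Matrix n n ℝ)}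
    (hF : IsFace {A : Matrix n n ℝ | A.PosSemidef} F) :
    ∃ Y ∈ F, ∀ Z ∈ F, ∀ v, Y *ᵥ v = 0 → Z *ᵥ v = 0 := by
  obtain ⟨hne, hFC, hconv, -⟩ := hF
  let kerDim : Matrix n n ℝ → ℕ := fun M => Module.finrank ℝ (LinearMap.ker M.mulVecLin)
  set Y := Function.argminOn kerDim F hne
  have hYF : Y ∈ F := Function.argminOn_mem kerDim F hne
  refine ⟨Y, hYF, fun Z hZF v hv => ?_⟩
  set M := (1 / 2 : ℝ) • Y + (1 / 2 : ℝ) • Z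
  have hMF : M ∈ F := hconv hYF hZF (by norm_num) (by norm_num) (by norm_num)
  have hMY : LinearMap.ker M.mulVecLin ≤ LinearMap.ker Y.mulVecLin := fun w hw =>
    (hFC hYF).mulVec_eq_zero_of_smul_add_smul (hFC hZF) one_half_pos one_half_pos.le hw
  have hker : LinearMap.ker M.mulVecLin = LinearMap.ker Y.mulVecLin :=
    Submodule.eq_of_le_of_finrank_le hMY (Function.argminOn_le kerDim F hMF)
  have hvM : M *ᵥ v = 0 := by
    change v ∈ LinearMap.ker M.mulVecLin
    rw [hker]
    exact hv
  exact (hFC hZF).mulVec_eq_zero_of_smul_add_smul (hFC hYF) one_half_pos one_half_pos.le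
    (by rwa [add_comm])

end PosSemidef

section Diagonal

variable {n : Type*} [Fintype n]

theorem Matrix.PosSemidef.dotProduct_mulVec_le_trace_mul {A : Matrix n n ℝ}
    (hA : A.PosSemidef) (x : n → ℝ) : x ⬝ᵥ A *ᵥ x ≤ A.trace * (x ⬝ᵥ x) := by
  classical
  obtain ⟨B, rfl⟩ : ∃ B : Matrix n n ℝ, A = Bᵀ * B := by
    open scoped MatrixOrder in
    obtain ⟨B, hB⟩ := CStarAlgebra.nonneg_iff_eq_star_mul_self.mp hA.nonneg
    exact ⟨B, by rw [hB, star_eq_conjTranspose, conjTranspose_eq_transpose_of_trivial]⟩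
  have hquad : x ⬝ᵥ (Bᵀ * B) *ᵥ x = ∑ i, (∑ j, B i j * x j) ^ 2 := by
    rw [← mulVec_mulVec, dotProduct_mulVec, vecMul_transpose]
    simp [dotProduct, mulVec, sq]
  have htrace : (Bᵀ * B).trace = ∑ i, ∑ j, B i j ^ 2 := by
    simp only [trace, diag_apply, mul_apply, transpose_apply]
    rw [Finset.sum_comm]
    simp [sq]
  rw [hquad, htrace, Finset.sum_mul]
  gcongr with i
  simpa [dotProduct, sq] using Finset.sum_mul_sq_le_sq_mul_sq Finset.univ (B i) x

open Filter Topology in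
theorem exists_pos_posSemidef_diagonal_sub_smul [DecidableEq n] {d : n → ℝ}
    (hd : ∀ i, 0 < d i) {A : Matrix n n ℝ} (hA : A.PosSemidef) :
    ∃ ε : ℝ, 0 < ε ∧ (diagonal d - ε • A).PosSemidef := by
  obtain ⟨ε, hεd, hε⟩ : ∃ ε : ℝ, (∀ i, ε * A.trace < d i) ∧ 0 < ε := by
    have hsmall : ∀ i, ∀ᶠ ε in 𝓝 (0 : ℝ), ε * A.trace < d i := fun i =>
      (continuous_id.mul continuous_const).tendsto' 0 0 (zero_mul _) |>.eventually_lt_const (hd i)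
    exact (((eventually_all.2 hsmall).filter_mono nhdsWithin_le_nhds).and
      self_mem_nhdsWithin : ∀ᶠ ε in 𝓝[>] (0 : ℝ), _).exists
  refine ⟨ε, hε, PosSemidef.of_dotProduct_mulVec_nonneg ?_ fun x => ?_⟩
  · exact (PosSemidef.diagonal fun i => (hd i).le).1.sub (hA.smul hε.le).1
  · have hdiag : x ⬝ᵥ diagonal d *ᵥ x = ∑ i, d i * (x i * x i) := by
      simp only [dotProduct, mulVec_diagonal]
      exact Finset.sum_congr rfl fun i _ => by ring
    calc 0 ≤ ∑ i, (d i - ε * A.trace) * (x i * x i) :=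
          Finset.sum_nonneg fun i _ => mul_nonneg (sub_pos.2 (hεd i)).le (mul_self_nonneg _)
      _ = x ⬝ᵥ diagonal d *ᵥ x - ε * (A.trace * (x ⬝ᵥ x)) := by
          rw [hdiag]
          simp only [dotProduct, sub_mul, Finset.sum_sub_distrib, Finset.mul_sum, mul_assoc]
      _ ≤ x ⬝ᵥ diagonal d *ᵥ x - ε * (x ⬝ᵥ A *ᵥ x) := by
          gcongr
          exact hA.dotProduct_mulVec_le_trace_mul x
      _ = star x ⬝ᵥ (diagonal d - ε • A) *ᵥ x := by
          simp [sub_mulVec, dotProduct_sub, smul_mulVec, dotProduct_smul]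

end Diagonal

section EmbedBlock

variable {k s : ℕ}

@[simp]
theorem embedBlock_apply_castLE (hs : s ≤ k) (A : Matrix (Fin s) (Fin s) ℝ) (a b : Fin s) :
    embedBlock k s A (Fin.castLE hs a) (Fin.castLE hs b) = A a b := by
  simp [embedBlock]

theorem embedBlock_apply_of_le_left (A : Matrix (Fin s) (Fin s) ℝ) {i : Fin k} (hi : s ≤ i)
    (j : Fin k) : embedBlock k s A i j = 0 := by
  simp [embedBlock, hi.not_gt]

theorem embedBlock_apply_of_le_right (A : Matrix (Fin s) (Fin s) ℝ) (i : Fin k) {j : Fin k}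
    (hj : s ≤ j) : embedBlock k s A i j = 0 := by
  simp [embedBlock, hj.not_gt]

theorem embedBlock_smul (c : ℝ) (A : Matrix (Fin s) (Fin s) ℝ) :
    embedBlock k s (c • A) = c • embedBlock k s A := by
  ext i j
  by_cases hi : (i : ℕ) < s <;> by_cases hj : (j : ℕ) < s <;> simp [embedBlock, hi, hj]

theorem embedBlock_sub (A B : Matrix (Fin s) (Fin s) ℝ) :
    embedBlock k s (A - B) = embedBlock k s A - embedBlock k s B := by
  ext i j
  by_cases hi : (i : ℕ) < s <;> by_cases hj : (j : ℕ) < s <;> simp [embedBlock, hi, hj]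

theorem embedBlock_mulVec_single (A : Matrix (Fin s) (Fin s) ℝ) {j : Fin k} (hj : s ≤ j) :
    embedBlock k s A *ᵥ Pi.single j 1 = 0 := by
  ext i
  simp [embedBlock_apply_of_le_right A i hj]

theorem Fin.sum_univ_eq_sum_castLE (hs : s ≤ k) {f : Fin k → ℝ}
    (hf : ∀ i : Fin k, s ≤ i → f i = 0) :
    ∑ i, f i = ∑ a, f (Fin.castLE hs a) :=
  (Fintype.sum_of_injective _ (Fin.castLE_injective hs) _ f
    (fun i hi => hf i (not_lt.1 fun h => hi ⟨⟨i, h⟩, rfl⟩)) fun _ => rfl).symm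

theorem dotProduct_embedBlock_mulVec (hs : s ≤ k) (A : Matrix (Fin s) (Fin s) ℝ)
    (x : Fin k → ℝ) :
    x ⬝ᵥ embedBlock k s A *ᵥ x = (x ∘ Fin.castLE hs) ⬝ᵥ A *ᵥ (x ∘ Fin.castLE hs) := by
  simp only [dotProduct, mulVec, Function.comp_apply]
  rw [Fin.sum_univ_eq_sum_castLE hs fun i hi => by simp [embedBlock_apply_of_le_left A hi]]
  refine Finset.sum_congr rfl fun a _ => ?_
  rw [Fin.sum_univ_eq_sum_castLE hs fun j hj => by simp [embedBlock_apply_of_le_right _ _ hj]]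
  simp

theorem posSemidef_embedBlock (hs : s ≤ k) {A : Matrix (Fin s) (Fin s) ℝ}
    (hA : A.PosSemidef) : (embedBlock k s A).PosSemidef := by
  refine PosSemidef.of_dotProduct_mulVec_nonneg ?_ fun x => ?_
  · ext i j
    by_cases hi : (i : ℕ) < s <;> by_cases hj : (j : ℕ) < s <;>
      simp only [embedBlock, conjTranspose_apply, of_apply, hi, hj, ↓reduceDIte, star_trivial]
    exact hA.1.apply _ _
  · simpa [dotProduct_embedBlock_mulVec hs] using hA.dotProduct_mulVec_nonneg (x ∘ Fin.castLE hs)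

theorem eq_embedBlock_submatrix (hs : s ≤ k) {M : Matrix (Fin k) (Fin k) ℝ}
    (hrow : ∀ i j : Fin k, s ≤ i → M i j = 0) (hcol : ∀ i j : Fin k, s ≤ j → M i j = 0) :
    M = embedBlock k s (M.submatrix (Fin.castLE hs) (Fin.castLE hs)) := by
  ext i j
  by_cases hi : (i : ℕ) < s
  · by_cases hj : (j : ℕ) < s
    · simp [embedBlock, hi, hj]
    · simp [embedBlock, hi, hj, hcol i j (not_lt.1 hj)]
  · simp [embedBlock, hi, hrow i j (not_lt.1 hi)]

end EmbedBlock

theorem Fin.exists_perm_forall_iff_lt {k : ℕ} (p : Fin k → Prop) :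
    ∃ (σ : Equiv.Perm (Fin k)) (s : ℕ), s ≤ k ∧ ∀ i, p (σ i) ↔ (i : ℕ) < s := by
  classical
  -- sorting by the key `if p i then 0 else 1` moves the indices satisfying `p` to the front
  obtain ⟨σ, hσ⟩ : ∃ σ : Equiv.Perm (Fin k), Monotone fun i => if p (σ i) then (0 : ℕ) else 1 :=
    ⟨_, Tuple.monotone_sort fun i => if p i then (0 : ℕ) else 1⟩
  have hlower : IsLowerSet {i | p (σ i)} := fun i j hji (hi : p (σ i)) => by
    simpa [hi] using hσ hji
  rcases hlower.eq_univ_or_Iio with h | ⟨a, h⟩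
  · exact ⟨σ, k, le_rfl, fun i => ⟨fun _ => i.2, fun _ => Set.eq_univ_iff_forall.1 h i⟩⟩
  · exact ⟨σ, a, a.2.le, fun i => (Set.ext_iff.1 h i).trans Fin.lt_def⟩

theorem Matrix.PosSemidef.exists_orthogonal_eq_embedBlock_diagonal {k : ℕ}
    {Y : Matrix (Fin k) (Fin k) ℝ} (hY : Y.PosSemidef) :
    ∃ (U : Matrix (Fin k) (Fin k) ℝ) (s : ℕ), s ≤ k ∧ ∃ d : Fin s → ℝ,
      Uᵀ * U = 1 ∧ (∀ a, 0 < d a) ∧ Y = U * embedBlock k s (diagonal d) * Uᵀ := by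
  let V : Matrix (Fin k) (Fin k) ℝ := hY.1.eigenvectorUnitary
  let f := hY.1.eigenvalues
  have hV : Vᵀ * V = 1 := by
    simpa [star_eq_conjTranspose] using (Unitary.mem_iff.mp hY.1.eigenvectorUnitary.2).1
  have hYV : Y = V * diagonal f * Vᵀ := by
    simpa [Unitary.conjStarAlgAut_apply, star_eq_conjTranspose] using hY.1.spectral_theorem
  obtain ⟨σ, s, hs, hσ⟩ := Fin.exists_perm_forall_iff_lt fun i => 0 < f i
  have hfσ : ∀ i : Fin k, s ≤ i → f (σ i) = 0 := fun i hi =>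
    le_antisymm (not_lt.1 fun h => (not_lt.2 hi) ((hσ i).1 h)) (hY.eigenvalues_nonneg _)
  refine ⟨V.submatrix id σ, s, hs, fun a => f (σ (Fin.castLE hs a)), ?_,
    fun a => (hσ _).2 a.2, ?_⟩
  · rw [transpose_submatrix, ← submatrix_mul _ _ _ _ _ Function.bijective_id, hV,
      submatrix_one_equiv]
  · have hdiag :
        diagonal (f ∘ σ) = embedBlock k s (diagonal fun a => f (σ (Fin.castLE hs a))) := by
      rw [eq_embedBlock_submatrix hs (M := diagonal (f ∘ σ))]
      · rw [submatrix_diagonal _ _ (Fin.castLE_injective hs)]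
        rfl
      · intro i j hi; simp [diagonal_apply, hfσ i hi]
      · intro i j hj; by_cases hij : i = j <;> simp [hij, hfσ j hj]
    rw [← hdiag, ← submatrix_diagonal_equiv, transpose_submatrix, submatrix_mul_equiv,
      submatrix_mul_equiv, hYV]
    simp

section Conjugation

variable {k s : ℕ}

theorem posSemidef_mul_embedBlock_mul_transpose (hs : s ≤ k) (U : Matrix (Fin k) (Fin k) ℝ)
    {A : Matrix (Fin s) (Fin s) ℝ} (hA : A.PosSemidef) :
    (U * embedBlock k s A * Uᵀ).PosSemidef := by
  simpa using (posSemidef_embedBlock hs hA).mul_mul_conjTranspose_same U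

theorem exists_posSemidef_eq_mul_embedBlock_mul_transpose_iff (hs : s ≤ k)
    {U : Matrix (Fin k) (Fin k) ℝ} (hU : Uᵀ * U = 1) (Z : Matrix (Fin k) (Fin k) ℝ) :
    (∃ A : Matrix (Fin s) (Fin s) ℝ, A.PosSemidef ∧ Z = U * embedBlock k s A * Uᵀ) ↔
      Z.PosSemidef ∧ ∀ j : Fin k, s ≤ j → Z *ᵥ (U *ᵥ Pi.single j 1) = 0 := by
  constructor
  · rintro ⟨A, hA, rfl⟩
    refine ⟨posSemidef_mul_embedBlock_mul_transpose hs U hA, fun j hj => ?_⟩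
    rw [mulVec_mulVec, Matrix.mul_assoc, hU, Matrix.mul_one, ← mulVec_mulVec,
      embedBlock_mulVec_single A hj, mulVec_zero]
  · rintro ⟨hZ, hker⟩
    set M := Uᵀ * Z * U
    have hM : M.PosSemidef := by simpa using hZ.conjTranspose_mul_mul_same U
    have hcol : ∀ i j : Fin k, s ≤ j → M i j = 0 := fun i j hj => by
      have hMj : M *ᵥ Pi.single j 1 = 0 := by
        simp only [M, ← mulVec_mulVec, hker j hj, mulVec_zero]
      simpa using congrFun hMj i
    have hrow : ∀ i j : Fin k, s ≤ i → M i j = 0 := fun i j hi => by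
      rw [← hM.1.apply]
      simpa using hcol j i hi
    have hUUt : U * Uᵀ = 1 := mul_eq_one_comm.mp hU
    refine ⟨M.submatrix (Fin.castLE hs) (Fin.castLE hs), hM.submatrix _, ?_⟩
    rw [← eq_embedBlock_submatrix hs hrow hcol]
    simp only [M, ← Matrix.mul_assoc, hUUt, Matrix.one_mul]
    rw [Matrix.mul_assoc, hUUt, Matrix.mul_one]

end Conjugation

/-- The faces of the positive semidefinite cone `Sᵏ₊` are exactly the sets
`{U·[[A,0],[0,0]]·Uᵀ : A ∈ Sˢ₊}` for `U` orthogonal and `0 ≤ s ≤ k`. -/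
theorem stmt14 (k : ℕ) (F : Set (Matrix (Fin k) (Fin k) ℝ)) :
    IsFace {A : Matrix (Fin k) (Fin k) ℝ | A.PosSemidef} F ↔
      ∃ (U : Matrix (Fin k) (Fin k) ℝ) (s : ℕ), s ≤ k ∧ Uᵀ * U = 1 ∧
        F = {M | ∃ A : Matrix (Fin s) (Fin s) ℝ, A.PosSemidef ∧
          M = U * embedBlock k s A * Uᵀ} := by
  have hcone : ∀ c : ℝ, 0 < c → ∀ A ∈ {A : Matrix (Fin k) (Fin k) ℝ | A.PosSemidef},
      c • A ∈ {A : Matrix (Fin k) (Fin k) ℝ | A.PosSemidef} := fun c hc A hA => hA.smul hc.le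
  constructor
  · intro hF
    obtain ⟨Y, hYF, hYker⟩ := hF.exists_forall_mulVec_eq_zero_imp
    obtain ⟨U, s, hs, d, hU, hd, hYd⟩ := (hF.2.1 hYF).exists_orthogonal_eq_embedBlock_diagonal
    have hblock := exists_posSemidef_eq_mul_embedBlock_mul_transpose_iff hs hU
    have hYcols := ((hblock Y).1 ⟨_, .diagonal fun a => (hd a).le, hYd⟩).2
    refine ⟨U, s, hs, hU, Set.ext fun Z => ⟨fun hZ => ?_, ?_⟩⟩
    · exact (hblock Z).2 ⟨hF.2.1 hZ, fun j hj => hYker Z hZ _ (hYcols j hj)⟩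
    · rintro ⟨A, hA, rfl⟩
      obtain ⟨ε, hε, hdA⟩ := exists_pos_posSemidef_diagonal_sub_smul hd hA
      refine hF.mem_of_sub_smul_mem hcone hYF (posSemidef_mul_embedBlock_mul_transpose hs U hA)
        hε ?_
      rw [hYd, ← Matrix.smul_mul, ← Matrix.mul_smul, ← Matrix.sub_mul, ← Matrix.mul_sub,
        ← embedBlock_smul, ← embedBlock_sub]
      exact posSemidef_mul_embedBlock_mul_transpose hs U hdA
  · rintro ⟨U, s, hs, hU, rfl⟩
    convert isFace_setOf_posSemidef_mulVec_eq_zero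
      (Set.range fun j : {j : Fin k // s ≤ j} => U *ᵥ Pi.single j.1 1) using 1
    ext Z
    simp [exists_posSemidef_eq_mul_embedBlock_mul_transpose_iff hs hU]
end
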